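/- The K-L-multi-shift rule (for K a proper subset of {1,…,n}: from Γ,(φ,k) → Δ for all k ∈ K, infer Γ → Δ, {φ}×(complement of K)) is derivable in NMVL_A from its premises, the derivable sequent → {φ}×{1,…,n}, and cuts. -/

import Mathlib

/-- Formulas over a set `C` of connectives (applied to lists of arguments). -/
inductive Fm (C : Type) : Type
  | atom : ℕ → Fm C
  | app : C → List (Fm C) → Fm C

noncomputable instance {C : Type} : DecidableEq (Fm C) := Classical.decEq _

/-- A sequent of finite sets of labelled formulas. -/
structure Sequent (C : Type) [DecidableEq C] (n : ℕ) where
  ant : Finset (Fm C × Fin n)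
  suc : Finset (Fm C × Fin n)

variable {C : Type} [DecidableEq C] {n : ℕ}

/-- A valuation legal w.r.t. the non-deterministic tables `tbl`. -/
def IsVal (tbl : C → List (Fin n) → Finset (Fin n)) (v : Fm C → Fin n) : Prop :=
  ∀ c args, v (Fm.app c args) ∈ tbl c (args.map v)

/-- A valuation satisfies a sequent. -/
def Sat (v : Fm C → Fin n) (S : Sequent C n) : Prop :=
  (∀ p ∈ S.ant, v p.1 = p.2) → ∃ p ∈ S.suc, v p.1 = p.2

/-- Semantic entailment. -/
def Entails (tbl : C → List (Fin n) → Finset (Fin n)) (H : Set (Sequent C n)) (S : Sequent C n) : Prop :=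
  ∀ v : Fm C → Fin n, IsVal tbl v → (∀ T ∈ H, Sat v T) → Sat v S

/-- The family (∗(φ₁,…,φ_ℓ)×k)⁻¹ of antecedent sets. -/
def Theta (tbl : C → List (Fin n) → Finset (Fin n)) (c : C) (args : List (Fm C)) (k : Fin n) :
    Set (Finset (Fm C × Fin n)) :=
  { Θ | ∃ ks : List (Fin n), ks.length = args.length ∧ k ∈ tbl c ks ∧ Θ = (args.zip ks).toFinset }

/-- Λ ∈ ⋁(∗(φ₁,…,φ_ℓ)×k)⁻¹ : a choice set hitting each Θ_q and contained in their union. -/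
def Choice (tbl : C → List (Fin n) → Finset (Fin n)) (c : C) (args : List (Fm C)) (k : Fin n)
    (Λ : Finset (Fm C × Fin n)) : Prop :=
  (∀ Θ ∈ Theta tbl c args k, ∃ x ∈ Θ, x ∈ Λ) ∧
  (∀ x ∈ Λ, ∃ Θ ∈ Theta tbl c args k, x ∈ Θ)

/-- Which optional axioms/rules a calculus has. -/
structure Rules where
  tableAx : Bool      -- table axioms (2)
  tableRuleS : Bool   -- succedent table rules (10)
  dualAx : Bool       -- distributively dual axioms (13)
  anteRule : Bool     -- antecedent introduction rules (17)
  multiShift : Bool   -- K-L-multi-shift (16)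
  cut : Bool
  res : Bool

/-- Derivability from hypothesis sequents `H`; axioms (ψ,k)→(ψ,k), L-shift, R-shift and
weakenings are always present, the other axioms/rules are governed by `R`. -/
inductive Deriv (R : Rules) (tbl : C → List (Fin n) → Finset (Fin n)) (H : Set (Sequent C n)) :
    Sequent C n → Prop
  | hyp {S} : S ∈ H → Deriv R tbl H S
  | ax (ψ : Fm C) (k : Fin n) : Deriv R tbl H ⟨{(ψ, k)}, {(ψ, k)}⟩
  | tableAx (c : C) (args : List (Fm C)) (ks : List (Fin n))
      (hlen : ks.length = args.length) (h : R.tableAx = true) :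
      Deriv R tbl H ⟨(args.zip ks).toFinset, (tbl c ks).image (fun k => (Fm.app c args, k))⟩
  | lshift {Γ Δ} (φ : Fm C) (k : Fin n) :
      Deriv R tbl H ⟨insert (φ, k) Γ, Δ⟩ →
      Deriv R tbl H ⟨Γ, Δ ∪ ({k}ᶜ : Finset (Fin n)).image (fun k' => (φ, k'))⟩
  | rshift {Γ Δ} (φ : Fm C) {k' k'' : Fin n} (h : k' ≠ k'') :
      Deriv R tbl H ⟨Γ, insert (φ, k') Δ⟩ → Deriv R tbl H ⟨insert (φ, k'') Γ, Δ⟩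
  | lweak {Γ Δ} (φ : Fm C) (k : Fin n) :
      Deriv R tbl H ⟨Γ, Δ⟩ → Deriv R tbl H ⟨insert (φ, k) Γ, Δ⟩
  | rweak {Γ Δ} (φ : Fm C) (k : Fin n) :
      Deriv R tbl H ⟨Γ, Δ⟩ → Deriv R tbl H ⟨Γ, insert (φ, k) Δ⟩
  | cut {Γ Δ} (φ : Fm C) (k : Fin n) (h : R.cut = true) :
      Deriv R tbl H ⟨Γ, insert (φ, k) Δ⟩ → Deriv R tbl H ⟨insert (φ, k) Γ, Δ⟩ →
      Deriv R tbl H ⟨Γ, Δ⟩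
  | res {Γ Δ' Δ''} (φ : Fm C) {k' k'' : Fin n} (h : R.res = true) (hk : k' ≠ k'') :
      Deriv R tbl H ⟨Γ, insert (φ, k') Δ'⟩ → Deriv R tbl H ⟨Γ, insert (φ, k'') Δ''⟩ →
      Deriv R tbl H ⟨Γ, Δ' ∪ Δ''⟩
  | tableRuleS {Γ Δ} (c : C) (args : List (Fm C)) (ks : List (Fin n))
      (hlen : ks.length = args.length) (h : R.tableRuleS = true)
      (prem : ∀ p ∈ args.zip ks, Deriv R tbl H ⟨Γ, insert p Δ⟩) :
      Deriv R tbl H ⟨Γ, Δ ∪ (tbl c ks).image (fun k => (Fm.app c args, k))⟩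
  | dualAx (c : C) (args : List (Fm C)) (k : Fin n) (Λ : Finset (Fm C × Fin n))
      (h : R.dualAx = true) (hΛ : Choice tbl c args k Λ) :
      Deriv R tbl H ⟨{(Fm.app c args, k)}, Λ⟩
  | anteRule {Γ Δ} (c : C) (args : List (Fm C)) (k : Fin n) (h : R.anteRule = true)
      (prem : ∀ ks : List (Fin n), ks.length = args.length → k ∈ tbl c ks →
        Deriv R tbl H ⟨Γ ∪ (args.zip ks).toFinset, Δ⟩) :
      Deriv R tbl H ⟨insert (Fm.app c args, k) Γ, Δ⟩
  | multiShift {Γ Δ} (φ : Fm C) (K : Finset (Fin n)) (h : R.multiShift = true)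
      (hK : K ≠ Finset.univ)
      (prem : ∀ k ∈ K, Deriv R tbl H ⟨insert (φ, k) Γ, Δ⟩) :
      Deriv R tbl H ⟨Γ, Δ ∪ Kᶜ.image (fun k' => (φ, k'))⟩

/-- NMVL_A : table axioms, cut and resolution. -/
def NMVL_A : Rules := ⟨true, false, false, false, false, true, true⟩
/-- NMVL_A with cut but without resolution. -/
def NMVL_A_cut : Rules := ⟨true, false, false, false, false, true, false⟩
/-- NMVL_A with resolution but without cut. -/
def NMVL_A_res : Rules := ⟨true, false, false, false, false, false, true⟩
/-- NMVL_R : succedent table rules, cut and resolution. -/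
def NMVL_R : Rules := ⟨false, true, false, false, false, true, true⟩
/-- NMVL_R without cut and resolution. -/
def NMVL_R_cf : Rules := ⟨false, true, false, false, false, false, false⟩
/-- NMVL_A^dd : distributively dual axioms, cut and resolution. -/
def NMVL_Add : Rules := ⟨false, false, true, false, false, true, true⟩
/-- NMVL_R^sd : antecedent table rules, multi-shift, cut and resolution. -/
def NMVL_Rsd : Rules := ⟨false, false, false, true, true, true, true⟩

/-
Every `(φ, k)` with `k ∈ K` is cut away, one label at a time, from the derivable
sequent `→ {φ} × {1,…,n}`; the premise for `k`, weakened, is the right premise of that cut.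
-/

namespace Deriv

variable {R : Rules} {tbl : C → List (Fin n) → Finset (Fin n)} {H : Set (Sequent C n)}

theorem union_suc {Γ Δ : Finset (Fm C × Fin n)} (h : Deriv R tbl H ⟨Γ, Δ⟩)
    (X : Finset (Fm C × Fin n)) : Deriv R tbl H ⟨Γ, X ∪ Δ⟩ := by
  induction X using Finset.induction_on with
  | empty => simpa using h
  | insert p X _ ih => simpa only [Finset.insert_union] using ih.rweak p.1 p.2

theorem union_ant {Γ Δ : Finset (Fm C × Fin n)} (h : Deriv R tbl H ⟨Γ, Δ⟩)
    (X : Finset (Fm C × Fin n)) : Deriv R tbl H ⟨X ∪ Γ, Δ⟩ := by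
  induction X using Finset.induction_on with
  | empty => simpa using h
  | insert p X _ ih => simpa only [Finset.insert_union] using ih.lweak p.1 p.2

theorem mono {Γ Δ Γ' Δ' : Finset (Fm C × Fin n)} (h : Deriv R tbl H ⟨Γ, Δ⟩)
    (hΓ : Γ ⊆ Γ') (hΔ : Δ ⊆ Δ') : Deriv R tbl H ⟨Γ', Δ'⟩ := by
  simpa only [Finset.sdiff_union_of_subset hΓ, Finset.sdiff_union_of_subset hΔ] using
    ((h.union_suc (Δ' \ Δ)).union_ant (Γ' \ Γ))

theorem all_labels [NeZero n] (φ : Fm C) :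
    Deriv R tbl H ⟨∅, Finset.univ.image (fun k => (φ, k))⟩ := by
  have h := (ax (R := R) (tbl := tbl) (H := H) φ 0).lshift (Γ := ∅) φ 0
  rwa [← Finset.insert_eq, ← Finset.image_insert, Finset.insert_compl_self] at h

theorem multiShift_of_cut [NeZero n] (hcut : R.cut = true) {Γ Δ : Finset (Fm C × Fin n)}
    (φ : Fm C) (K : Finset (Fin n)) (prem : ∀ k ∈ K, Deriv R tbl H ⟨insert (φ, k) Γ, Δ⟩) :
    Deriv R tbl H ⟨Γ, Δ ∪ Kᶜ.image (fun k => (φ, k))⟩ := by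
  induction K using Finset.induction_on with
  | empty =>
    exact (all_labels φ).mono (Finset.empty_subset Γ) (by simp)
  | insert a K haK ih =>
    have hK : Kᶜ = insert a (insert a K)ᶜ := by
      rw [Finset.compl_insert, Finset.insert_erase (Finset.mem_compl.mpr haK)]
    have hleft : Deriv R tbl H ⟨Γ, insert (φ, a) (Δ ∪ (insert a K)ᶜ.image (fun k => (φ, k)))⟩ := by
      simpa only [hK, Finset.image_insert, Finset.union_insert] using
        ih fun k hk => prem k (Finset.mem_insert_of_mem hk)
    have hright := (prem a (Finset.mem_insert_self a K)).mono (Finset.Subset.refl _)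
      (Finset.subset_union_left (s₂ := (insert a K)ᶜ.image (fun k => (φ, k))))
    exact cut φ a hcut hleft hright

end Deriv

theorem stmt16_general (hn : 2 ≤ n) (tbl : C → List (Fin n) → Finset (Fin n))
    (H : Set (Sequent C n))
    (Γ Δ : Finset (Fm C × Fin n)) (φ : Fm C) (K : Finset (Fin n))
    (prem : ∀ k ∈ K, Deriv NMVL_A tbl H ⟨insert (φ, k) Γ, Δ⟩) :
    Deriv NMVL_A tbl H ⟨Γ, Δ ∪ Kᶜ.image (fun k' => (φ, k'))⟩ :=
  haveI : NeZero n := ⟨by omega⟩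
  Deriv.multiShift_of_cut rfl φ K prem

/-- the K-L-multi-shift rule is derivable in NMVL_A. -/
theorem stmt16 (hn : 2 ≤ n) (tbl : C → List (Fin n) → Finset (Fin n))
    (htbl : ∀ c ks, (tbl c ks).Nonempty) (H : Set (Sequent C n))
    (Γ Δ : Finset (Fm C × Fin n)) (φ : Fm C) (K : Finset (Fin n)) (hK : K ≠ Finset.univ)
    (prem : ∀ k ∈ K, Deriv NMVL_A tbl H ⟨insert (φ, k) Γ, Δ⟩) :
    Deriv NMVL_A tbl H ⟨Γ, Δ ∪ Kᶜ.image (fun k' => (φ, k'))⟩ :=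
  stmt16_general hn tbl H Γ Δ φ K prem
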